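/- Let g ≥ 2 and b > 1 be integers with gcd(b,g) = 1, let a be a positive integer with gcd(a,b) = 1 and a < b^k, let j ≥ 1, t ≥ 1 and k ≥ c_g(b). Set u_t = b^t mod g^j. Then for every s' ∈ {0,…,g^j−1}: ν_{k+t}(s') = ⌊b^t/g^j⌋·ord_g(b^k) + Σ_{m=0}^{u_t−1} ν_k((s'·u_t + m) mod g^j). -/

import Mathlib

/-- `ordg g m = min {n ≥ 1 : g^n ≡ 1 (mod m)}`, the multiplicative order of `g` modulo `m`. -/
noncomputable def ordg (g m : ℕ) : ℕ := sInf {n : ℕ | 0 < n ∧ g ^ n ≡ 1 [MOD m]}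

/-- `cg g b` is the least `c ≥ 1` such that `ord_g(b^{c+t}) = b^t·ord_g(b^c)` for all `t ≥ 1`. -/
noncomputable def cg (g b : ℕ) : ℕ :=
  sInf {c : ℕ | 0 < c ∧ ∀ t : ℕ, 0 < t → ordg g (b ^ (c + t)) = b ^ t * ordg g (b ^ c)}

/-- `nu g b a j k s` is the absolute frequency of the `j`-word `s` in the enlarged
repetend of `a/b^k`: the number of `i` with `j ≤ i ≤ ord_g(b^k)+j−1` and
`⌊a·g^i/b^k⌋ mod g^j = s`. -/
noncomputable def nu (g b a j k s : ℕ) : ℕ :=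
  ((Finset.Icc j (ordg g (b ^ k) + j - 1)).filter
    (fun i => (a * g ^ i / b ^ k) % g ^ j = s)).card

/-!
Write `P = b^k`, `B = b^t`, `D = g^j` and `N = ord_g(P)`. For `k ≥ c_g(b)` the order of `g`
modulo `b^(k+t)` is `B·N`, so the positions `l, l + N, …, l + (B-1)N` of the expansion of
`a/b^(k+t)` carry the residues `a·g^l mod P + c·P`, `c < B`, each exactly once. The `j`-word at
such a position is `⌊(c·D + w_l)/B⌋`, where `w_l` is the `j`-word of `a/P` at position `l`.
Counting the `c` giving a fixed word `s'` means counting the `x ≡ w_l (mod D)` in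
`[s'B, s'B + B)`: there are `⌊B/D⌋` of them, plus one exactly when `w_l ≡ s'·u + m (mod D)` for
some `m < u = B mod D`. Summing over `l < N` gives the formula.

Since `c_g(b)` is an infimum, one first needs some `c` with `ord_g(b^(c+t)) = b^t·ord_g(b^c)`.
Write `g^(ord_g(b^k)) = 1 + λ_k·b^k`. Passing from `b^k` to `b^(k+1)` multiplies the order by
`b / gcd(b, λ_k)`, and for `k ≥ 2`, as long as `gcd(b, λ_k) ≠ 1`, the total multiplicity in
`λ_k` of the primes dividing `b` strictly drops. Hence some `λ_c` is coprime to `b`, and from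
then on every `λ_k` is, so the order is multiplied by `b` at each step.
-/

open Finset

section OrdBasics

variable {g m n : ℕ}

lemma pow_modEq_one_iff_zmod : g ^ n ≡ 1 [MOD m] ↔ (g : ZMod m) ^ n = 1 := by
  rw [← ZMod.natCast_eq_natCast_iff, Nat.cast_pow, Nat.cast_one]

lemma isOfFinOrder_natCast_zmod (hgm : g.Coprime m) (hm : 0 < m) :
    IsOfFinOrder (g : ZMod m) :=
  isOfFinOrder_iff_pow_eq_one.mpr
    ⟨m.totient, Nat.totient_pos.mpr hm, pow_modEq_one_iff_zmod.mp (Nat.ModEq.pow_totient hgm)⟩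

lemma ordg_eq_orderOf (hgm : g.Coprime m) (hm : 0 < m) : ordg g m = orderOf (g : ZMod m) := by
  have hmem : orderOf (g : ZMod m) ∈ {n : ℕ | 0 < n ∧ g ^ n ≡ 1 [MOD m]} :=
    ⟨(isOfFinOrder_natCast_zmod hgm hm).orderOf_pos,
      pow_modEq_one_iff_zmod.mpr (pow_orderOf_eq_one _)⟩
  obtain ⟨hpos, hpow⟩ := Nat.sInf_mem ⟨_, hmem⟩
  exact (Nat.sInf_le hmem).antisymm
    (orderOf_le_of_pow_eq_one hpos (pow_modEq_one_iff_zmod.mp hpow))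

lemma ordg_pos (hgm : g.Coprime m) (hm : 0 < m) : 0 < ordg g m :=
  ordg_eq_orderOf hgm hm ▸ (isOfFinOrder_natCast_zmod hgm hm).orderOf_pos

lemma ordg_dvd_iff (hgm : g.Coprime m) (hm : 0 < m) :
    ordg g m ∣ n ↔ g ^ n ≡ 1 [MOD m] := by
  rw [ordg_eq_orderOf hgm hm, orderOf_dvd_iff_pow_eq_one, pow_modEq_one_iff_zmod]

lemma pow_ordg_modEq (hgm : g.Coprime m) (hm : 0 < m) : g ^ ordg g m ≡ 1 [MOD m] :=
  (ordg_dvd_iff hgm hm).mp dvd_rfl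

lemma ordg_dvd_ordg {m' : ℕ} (hgm' : g.Coprime m') (hm' : 0 < m') (hd : m ∣ m') :
    ordg g m ∣ ordg g m' :=
  (ordg_dvd_iff (hgm'.coprime_dvd_right hd) (Nat.pos_of_dvd_of_pos hd hm')).mpr
    ((pow_ordg_modEq hgm' hm').of_dvd hd)

lemma ordg_pow_of_dvd (hgm : g.Coprime m) (hm : 0 < m) (hn : n ≠ 0) (hdvd : n ∣ ordg g m) :
    ordg (g ^ n) m = ordg g m / n := by
  rw [ordg_eq_orderOf (hgm.pow_left n) hm, ordg_eq_orderOf hgm hm, Nat.cast_pow,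
    orderOf_pow_of_dvd hn (ordg_eq_orderOf hgm hm ▸ hdvd)]

end OrdBasics

noncomputable def ordgQuot (g m : ℕ) : ℕ := (g ^ ordg g m - 1) / m

lemma exists_one_add_pow_eq (x n : ℕ) : ∃ z, (1 + x) ^ n = 1 + n * x + x ^ 2 * z := by
  induction n with
  | zero => exact ⟨0, by ring⟩
  | succ n ih =>
    obtain ⟨z, hz⟩ := ih
    exact ⟨n + z + x * z, by rw [pow_succ, hz]; ring⟩

lemma Nat.dvd_mul_iff_div_gcd_dvd {b q r : ℕ} (hb : 0 < b) :
    b ∣ r * q ↔ b / b.gcd q ∣ r := by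
  have he : 0 < b.gcd q := Nat.gcd_pos_of_pos_left q hb
  calc b ∣ r * q ↔ b / b.gcd q * b.gcd q ∣ r * (q / b.gcd q) * b.gcd q := by
        rw [Nat.div_mul_cancel (Nat.gcd_dvd_left b q), mul_assoc,
          Nat.div_mul_cancel (Nat.gcd_dvd_right b q)]
    _ ↔ b / b.gcd q ∣ r * (q / b.gcd q) := Nat.mul_dvd_mul_iff_right he
    _ ↔ b / b.gcd q ∣ r := (Nat.coprime_div_gcd_div_gcd he).dvd_mul_right

section Quot

variable {g m b : ℕ}

lemma pow_ordg_eq_one_add (hg : 0 < g) (hgm : g.Coprime m) (hm : 0 < m) :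
    g ^ ordg g m = 1 + ordgQuot g m * m := by
  have hle : 1 ≤ g ^ ordg g m := Nat.one_le_pow _ _ hg
  have hdvd : m ∣ g ^ ordg g m - 1 := (Nat.modEq_iff_dvd' hle).mp (pow_ordg_modEq hgm hm).symm
  rw [ordgQuot, Nat.div_mul_cancel hdvd]
  omega

lemma ordgQuot_pos (hg : 1 < g) (hgm : g.Coprime m) (hm : 0 < m) : 0 < ordgQuot g m := by
  have h := pow_ordg_eq_one_add (by omega) hgm hm
  have : 1 < g ^ ordg g m := Nat.one_lt_pow (ordg_pos hgm hm).ne' hg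
  exact Nat.pos_of_ne_zero fun h0 => by rw [h0] at h; omega

lemma pow_ordg_mul_modEq_one_iff (hg : 0 < g) (hgm : g.Coprime m) (hm : 0 < m) (hbm : b ∣ m)
    (r : ℕ) : g ^ (ordg g m * r) ≡ 1 [MOD m * b] ↔ b ∣ r * ordgQuot g m := by
  set q := ordgQuot g m
  obtain ⟨z, hz⟩ := exists_one_add_pow_eq (q * m) r
  have hsplit : r * (q * m) + (q * m) ^ 2 * z = m * (r * q + q ^ 2 * m * z) := by ring
  rw [pow_mul, pow_ordg_eq_one_add hg hgm hm, hz, Nat.ModEq.comm,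
    Nat.modEq_iff_dvd' (by omega), add_assoc, Nat.add_sub_cancel_left, hsplit,
    Nat.mul_dvd_mul_iff_left hm]
  exact Nat.dvd_add_left ((hbm.mul_left _).mul_right z)

lemma ordg_mul_eq (hg : 0 < g) (hgm : g.Coprime (m * b)) (hm : 0 < m) (hb : 0 < b)
    (hbm : b ∣ m) : ordg g (m * b) = ordg g m * (b / b.gcd (ordgQuot g m)) := by
  have hgm' : g.Coprime m := hgm.coprime_dvd_right (dvd_mul_right m b)
  have hmb : 0 < m * b := Nat.mul_pos hm hb
  obtain ⟨r, hr⟩ := ordg_dvd_ordg hgm hmb (dvd_mul_right m b)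
  have key : ∀ r', ordg g m * r ∣ ordg g m * r' ↔ b / b.gcd (ordgQuot g m) ∣ r' := fun r' => by
    rw [← hr, ordg_dvd_iff hgm hmb, pow_ordg_mul_modEq_one_iff hg hgm' hm hbm,
      Nat.dvd_mul_iff_div_gcd_dvd hb]
  rw [hr, Nat.dvd_antisymm
    ((Nat.mul_dvd_mul_iff_left (ordg_pos hgm' hm)).mp ((key _).mpr dvd_rfl)) ((key r).mp dvd_rfl)]

lemma ordgQuot_mul_eq (hg : 0 < g) (hgm : g.Coprime (m * b)) (hm : 0 < m) (hb : 0 < b)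
    (hbm : b * b ∣ m) :
    ∃ y, ordgQuot g (m * b) = ordgQuot g m / b.gcd (ordgQuot g m) + ordgQuot g m * b * y := by
  have hgm' : g.Coprime m := hgm.coprime_dvd_right (dvd_mul_right m b)
  set q := ordgQuot g m
  set e := b.gcd q
  obtain ⟨z, hz⟩ := exists_one_add_pow_eq (q * m) (b / e)
  have hpow : 1 + ordgQuot g (m * b) * (m * b) = 1 + b / e * (q * m) + (q * m) ^ 2 * z := by
    rw [← pow_ordg_eq_one_add hg hgm (Nat.mul_pos hm hb),
      ordg_mul_eq hg hgm hm hb ((dvd_mul_right b b).trans hbm), pow_mul,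
      pow_ordg_eq_one_add hg hgm' hm, hz]
  have he : 0 < e := Nat.gcd_pos_of_pos_left q hb
  obtain ⟨b', hb'⟩ : e ∣ b := Nat.gcd_dvd_left b q
  obtain ⟨μ, hμ⟩ : e ∣ q := Nat.gcd_dvd_right b q
  obtain ⟨w, hw⟩ := hbm
  have hbe : b / e = b' := by rw [hb', Nat.mul_div_cancel_left _ he]
  have hqe : q / e = μ := by rw [hμ, Nat.mul_div_cancel_left _ he]
  refine ⟨q * w * z, Nat.eq_of_mul_eq_mul_right (Nat.mul_pos hm hb) ?_⟩
  calc ordgQuot g (m * b) * (m * b) = b' * q * m + (q * m) ^ 2 * z := by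
        rw [hbe] at hpow; linarith
    _ = (q / e + q * b * (q * w * z)) * (m * b) := by
        rw [hqe, show b' * q = μ * b by rw [hb', hμ]; ring, hw]
        ring

end Quot

def factorizationOn (b x : ℕ) : ℕ := ∑ p ∈ b.primeFactors, x.factorization p

lemma Nat.factorization_add_of_mul_dvd {p x y : ℕ} (hp : p.Prime) (hx : x ≠ 0)
    (h : p * x ∣ y) : (x + y).factorization p = x.factorization p := by
  obtain ⟨w, rfl⟩ := h
  have hnd : ¬ p ∣ 1 + p * w := fun hd =>
    hp.not_dvd_one ((Nat.dvd_add_left (dvd_mul_right p w)).mp hd)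
  rw [show x + p * x * w = x * (1 + p * w) by ring, Nat.factorization_mul hx (by omega),
    Finsupp.add_apply, Nat.factorization_eq_zero_of_not_dvd hnd, add_zero]

section FactorizationOn

variable {b x : ℕ}

lemma factorizationOn_add_of_mul_dvd {y : ℕ} (hx : x ≠ 0) (h : b * x ∣ y) :
    factorizationOn b (x + y) = factorizationOn b x :=
  Finset.sum_congr rfl fun _ hp => Nat.factorization_add_of_mul_dvd
    (Nat.prime_of_mem_primeFactors hp) hx
    ((Nat.mul_dvd_mul_right (Nat.dvd_of_mem_primeFactors hp) x).trans h)

lemma factorizationOn_div_lt {e : ℕ} (hb : b ≠ 0) (hx : x ≠ 0) (heb : e ∣ b) (hex : e ∣ x)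
    (he : e ≠ 1) : factorizationOn b (x / e) < factorizationOn b x := by
  obtain ⟨p, hp, hpe⟩ := Nat.exists_prime_and_dvd he
  have he0 : e ≠ 0 := ne_zero_of_dvd_ne_zero hx hex
  have hle := (Nat.factorization_le_iff_dvd he0 hx).mpr hex p
  have hpos := hp.factorization_pos_of_dvd he0 hpe
  unfold factorizationOn
  rw [Nat.factorization_div hex]
  refine Finset.sum_lt_sum (fun _ _ => Nat.sub_le _ _)
    ⟨p, Nat.mem_primeFactors.mpr ⟨hp, hpe.trans heb, hb⟩, ?_⟩
  rw [Finsupp.tsub_apply]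
  omega

end FactorizationOn

section Stabilization

variable {g m b : ℕ}

lemma coprime_ordgQuot_mul (hg : 0 < g) (hgm : g.Coprime (m * b)) (hm : 0 < m) (hb : 0 < b)
    (hbm : b * b ∣ m) (h : b.Coprime (ordgQuot g m)) : b.Coprime (ordgQuot g (m * b)) := by
  obtain ⟨y, hy⟩ := ordgQuot_mul_eq hg hgm hm hb hbm
  rw [hy, h.gcd_eq_one, Nat.div_one, mul_right_comm]
  exact (Nat.coprime_add_mul_right_right _ _ _).mpr h

lemma factorizationOn_ordgQuot_mul_lt (hg : 1 < g) (hgm : g.Coprime (m * b)) (hm : 0 < m)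
    (hb : 0 < b) (hbm : b * b ∣ m) (h : ¬ b.Coprime (ordgQuot g m)) :
    factorizationOn b (ordgQuot g (m * b)) < factorizationOn b (ordgQuot g m) := by
  obtain ⟨y, hy⟩ := ordgQuot_mul_eq (by omega) hgm hm hb hbm
  have hq := ordgQuot_pos hg (hgm.coprime_dvd_right (dvd_mul_right m b)) hm
  set q := ordgQuot g m
  have hdvd : b.gcd q ∣ q := Nat.gcd_dvd_right b q
  have hμ : q / b.gcd q ≠ 0 :=
    (Nat.div_pos (Nat.le_of_dvd hq hdvd) (Nat.gcd_pos_of_pos_left q hb)).ne'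
  rw [hy, factorizationOn_add_of_mul_dvd hμ ⟨b.gcd q * y, ?_⟩]
  · exact factorizationOn_div_lt hb.ne' hq.ne' (Nat.gcd_dvd_left b q) hdvd h
  · conv_lhs => rw [← Nat.div_mul_cancel hdvd]
    ring

lemma exists_coprime_ordgQuot (hg : 1 < g) (hgb : g.Coprime b) (hb : 0 < b) :
    ∃ c, 2 ≤ c ∧ b.Coprime (ordgQuot g (b ^ c)) := by
  by_contra! H
  have hdesc : ∀ i, factorizationOn b (ordgQuot g (b ^ (2 + i))) + i
      ≤ factorizationOn b (ordgQuot g (b ^ 2)) := by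
    intro i
    induction i with
    | zero => simp
    | succ i ih =>
      have hlt := factorizationOn_ordgQuot_mul_lt hg (by rw [← pow_succ]; exact hgb.pow_right _)
        (pow_pos hb _) hb (by rw [← sq]; exact pow_dvd_pow b (by omega)) (H (2 + i) (by omega))
      rw [← pow_succ] at hlt
      rw [show 2 + (i + 1) = 2 + i + 1 from rfl]
      omega
  have := hdesc (factorizationOn b (ordgQuot g (b ^ 2)) + 1)
  omega

lemma ordg_pow_succ_of_coprime (hg : 0 < g) (hgb : g.Coprime b) (hb : 0 < b) {k : ℕ}
    (hk : 1 ≤ k) (h : b.Coprime (ordgQuot g (b ^ k))) :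
    ordg g (b ^ (k + 1)) = b * ordg g (b ^ k) := by
  rw [pow_succ, ordg_mul_eq hg (by rw [← pow_succ]; exact hgb.pow_right _) (pow_pos hb _) hb
    (dvd_pow_self b (by omega)), h.gcd_eq_one, Nat.div_one, mul_comm]

lemma exists_ordg_pow_add_eq (hg : 1 < g) (hgb : g.Coprime b) (hb : 0 < b) :
    ∃ c, 0 < c ∧ ∀ t, ordg g (b ^ (c + t)) = b ^ t * ordg g (b ^ c) := by
  obtain ⟨c, hc, hcop⟩ := exists_coprime_ordgQuot hg hgb hb
  have hcop' : ∀ k, c ≤ k → b.Coprime (ordgQuot g (b ^ k)) := by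
    intro k hk
    induction k, hk using Nat.le_induction with
    | base => exact hcop
    | succ k hk ih =>
      rw [pow_succ]
      exact coprime_ordgQuot_mul (by omega) (by rw [← pow_succ]; exact hgb.pow_right _)
        (pow_pos hb _) hb (by rw [← sq]; exact pow_dvd_pow b (by omega)) ih
  refine ⟨c, by omega, fun t => ?_⟩
  induction t with
  | zero => simp
  | succ t ih =>
    rw [← add_assoc, ordg_pow_succ_of_coprime (by omega) hgb hb (by omega)
      (hcop' _ (by omega)), ih, pow_succ]
    ring

lemma cg_mem (hg : 1 < g) (hgb : g.Coprime b) (hb : 0 < b) :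
    cg g b ∈
      {c : ℕ | 0 < c ∧ ∀ t : ℕ, 0 < t → ordg g (b ^ (c + t)) = b ^ t * ordg g (b ^ c)} :=
  have ⟨c, hc, h⟩ := exists_ordg_pow_add_eq hg hgb hb
  Nat.sInf_mem ⟨c, hc, fun t _ => h t⟩

lemma ordg_pow_add_of_cg_le (hg : 1 < g) (hgb : g.Coprime b) (hb : 0 < b) {k : ℕ}
    (hk : cg g b ≤ k) (t : ℕ) : ordg g (b ^ (k + t)) = b ^ t * ordg g (b ^ k) := by
  have h : ∀ s, ordg g (b ^ (cg g b + s)) = b ^ s * ordg g (b ^ cg g b) := by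
    intro s
    rcases s.eq_zero_or_pos with rfl | hs
    · simp
    · exact (cg_mem hg hgb hb).2 s hs
  obtain ⟨d, rfl⟩ := Nat.exists_eq_add_of_le hk
  rw [add_assoc, h, h, pow_add]
  ring

end Stabilization

lemma Finset.sum_range_mul_eq {M : Type*} [AddCommMonoid M] (f : ℕ → M) (q n : ℕ) :
    ∑ m ∈ range (q * n), f m = ∑ i ∈ range q, ∑ m ∈ range n, f (i * n + m) := by
  induction q with
  | zero => simp
  | succ q ih => rw [sum_range_succ, ← ih, add_mul, one_mul, sum_range_add]

lemma Nat.div_eq_iff_le_lt {x B s : ℕ} (hB : 0 < B) :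
    x / B = s ↔ s * B ≤ x ∧ x < s * B + B := by
  rw [Nat.div_eq_iff hB]
  omega

section Counting

variable {M : Type*} [AddCommMonoid M] {B D s w : ℕ}

lemma sum_range_add_mod_eq (F : ℕ → M) (hD : 0 < D) (n : ℕ) :
    ∑ m ∈ range D, F ((n + m) % D) = ∑ y ∈ range D, F y := by
  have := NeZero.of_pos hD
  rw [← Fin.sum_univ_eq_sum_range (fun m => F ((n + m) % D)), ← Fin.sum_univ_eq_sum_range F]
  exact Fintype.sum_equiv (Equiv.addLeft (Fin.ofNat D n)) _ _ fun m => by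
    simp [Fin.val_add]

lemma sum_range_add_mod_eq_nsmul_add (F : ℕ → M) (hD : 0 < D) (n L : ℕ) :
    ∑ m ∈ range L, F ((n + m) % D)
      = (L / D) • ∑ y ∈ range D, F y + ∑ m ∈ range (L % D), F ((n + m) % D) := by
  have hshift : ∀ i m, (n + (i * D + m)) % D = (n + m) % D := fun i m => by
    rw [show n + (i * D + m) = n + m + i * D by ring, Nat.add_mul_mod_self_right]
  conv_lhs => rw [← Nat.div_add_mod' L D]
  simp only [sum_range_add, sum_range_mul_eq, hshift, sum_range_add_mod_eq F hD, sum_const,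
    card_range]

lemma card_filter_mul_add_div_eq (hD : 0 < D) (hw : w < D) (hs : s < D) :
    #{c ∈ range B | (c * D + w) / B = s} = #{m ∈ range B | (s * B + m) % D = w} := by
  have hsB : (s + 1) * B ≤ D * B := Nat.mul_le_mul_right B hs
  refine card_bij' (fun c _ => c * D + w - s * B) (fun m _ => (s * B + m) / D) ?_ ?_ ?_ ?_
  · intro c hc
    simp only [mem_filter, mem_range] at hc ⊢
    obtain ⟨hcB, hc⟩ := hc
    rw [Nat.div_eq_iff_le_lt (by omega)] at hc
    refine ⟨by omega, ?_⟩
    rw [show s * B + (c * D + w - s * B) = c * D + w by omega, Nat.mul_add_mod_self_right,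
      Nat.mod_eq_of_lt hw]
  · intro m hm
    simp only [mem_filter, mem_range] at hm ⊢
    obtain ⟨hmB, hm⟩ := hm
    have hx := Nat.div_add_mod' (s * B + m) D
    rw [hm] at hx
    refine ⟨(Nat.div_lt_iff_lt_mul hD).mpr (by nlinarith), ?_⟩
    rw [hx, Nat.div_eq_iff_le_lt (by omega)]
    omega
  · intro c hc
    simp only [mem_filter, mem_range] at hc
    rw [Nat.div_eq_iff_le_lt (by omega)] at hc
    rw [show s * B + (c * D + w - s * B) = w + c * D by omega, Nat.add_mul_div_right _ _ hD,
      Nat.div_eq_of_lt hw, zero_add]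
  · intro m hm
    simp only [mem_filter, mem_range] at hm
    have hx := Nat.div_add_mod' (s * B + m) D
    rw [hm.2] at hx
    omega

lemma card_filter_mul_add_div_eq_add (hD : 0 < D) (hw : w < D) (hs : s < D) :
    #{c ∈ range B | (c * D + w) / B = s}
      = B / D + #{m ∈ range (B % D) | (s * (B % D) + m) % D = w} := by
  have hmod : ∀ m, (s * B + m) % D = (s * (B % D) + m) % D := fun m =>
    (((Nat.mod_modEq B D).mul_left s).add_right m).symm
  have hsum := sum_range_add_mod_eq_nsmul_add (fun y => if y = w then 1 else 0) hD (s * B) B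
  simp only [sum_ite_eq', mem_range, hw, if_true, smul_eq_mul, mul_one, hmod] at hsum
  rw [card_filter_mul_add_div_eq hD hw hs, card_filter, card_filter, ← hsum]
  simp only [hmod]

end Counting

lemma Nat.mod_mul_div_lt (x P D : ℕ) (hP : 0 < P) (hD : 0 < D) : x % P * D / P < D :=
  Nat.div_lt_of_lt_mul (Nat.mul_lt_mul_of_pos_right (Nat.mod_lt x hP) hD)

lemma Nat.mul_div_mod_eq_mod_mul_div (y P D : ℕ) (hP : 0 < P) (hD : 0 < D) :
    y * D / P % D = y % P * D / P := by
  rw [show y * D = y % P * D + y / P * D * P by nth_rewrite 1 [← Nat.mod_add_div y P]; ring,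
    Nat.add_mul_div_right _ _ hP, Nat.add_mul_mod_self_right,
    Nat.mod_eq_of_lt (Nat.mod_mul_div_lt y P D hP hD)]

lemma nu_eq_card {g b a j k : ℕ} (hg : 0 < g) (hb : 0 < b) (hN : 0 < ordg g (b ^ k)) (s : ℕ) :
    nu g b a j k s = #{l ∈ range (ordg g (b ^ k)) | a * g ^ l % b ^ k * g ^ j / b ^ k = s} := by
  have hIcc :
      Icc j (ordg g (b ^ k) + j - 1) = (range (ordg g (b ^ k))).map (addRightEmbedding j) := by
    rw [range_eq_Ico, map_add_right_Ico, zero_add]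
    ext i
    simp only [mem_Icc, mem_Ico]
    omega
  rw [nu, hIcc, filter_map, card_map]
  refine congrArg card (filter_congr fun l _ => ?_)
  simp only [Function.comp_apply, addRightEmbedding_apply, pow_add, ← mul_assoc,
    Nat.mul_div_mod_eq_mod_mul_div _ _ _ (pow_pos hb k) (pow_pos hg j)]

lemma Nat.add_mul_mul_div_mul (r c P D B : ℕ) (hP : 0 < P) :
    (r + c * P) * D / (P * B) = (c * D + r * D / P) / B := by
  rw [← Nat.div_div_eq_div_mul, show (r + c * P) * D = r * D + c * D * P by ring,
    Nat.add_mul_div_right _ _ hP, add_comm]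

section Orbit

variable {x h P B : ℕ}

lemma sum_mul_pow_mod_eq {M : Type*} [AddCommMonoid M] (f : ℕ → M) (hP : 0 < P) (hB : 0 < B)
    (hx : x.Coprime (P * B)) (hhc : h.Coprime (P * B)) (hh : h ≡ 1 [MOD P])
    (hord : ordg h (P * B) = B) :
    ∑ i ∈ range B, f (x * h ^ i % (P * B)) = ∑ c ∈ range B, f (x % P + c * P) := by
  have hQ : 0 < P * B := Nat.mul_pos hP hB
  have hdecomp : ∀ i, x * h ^ i % (P * B) = x % P + x * h ^ i % (P * B) / P * P := fun i => by
    have hmod : x * h ^ i % (P * B) % P = x % P := by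
      rw [Nat.mod_mod_of_dvd _ (dvd_mul_right P B)]
      have := (hh.pow i).mul_left x
      rwa [one_pow, mul_one] at this
    rw [← hmod, Nat.mod_add_div']
  have hinj : Set.InjOn (fun i => x * h ^ i % (P * B) / P) (range B) := by
    intro i hi i' hi' he
    have hcast : (x : ZMod (P * B)) * (h : ZMod (P * B)) ^ i = x * (h : ZMod (P * B)) ^ i' := by
      have := congrArg (Nat.cast : ℕ → ZMod (P * B)) <|
        (hdecomp i).trans ((congrArg (x % P + · * P) he).trans (hdecomp i').symm)
      simpa using this
    rw [ordg_eq_orderOf hhc hQ] at hord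
    exact pow_injOn_Iio_orderOf (by simpa [hord] using hi) (by simpa [hord] using hi')
      (((ZMod.isUnit_iff_coprime x _).mpr hx).mul_left_cancel hcast)
  have hmaps : ∀ i ∈ range B, x * h ^ i % (P * B) / P ∈ range B := fun i _ =>
    mem_range.mpr (Nat.div_lt_of_lt_mul (Nat.mod_lt _ hQ))
  exact sum_nbij _ hmaps hinj (surjOn_of_injOn_of_card_le _ hmaps hinj le_rfl)
    fun i _ => congrArg f (hdecomp i)

lemma card_filter_mul_pow_mod_div_eq {D s : ℕ} (hP : 0 < P) (hB : 0 < B) (hD : 0 < D)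
    (hs : s < D) (hx : x.Coprime (P * B)) (hhc : h.Coprime (P * B)) (hh : h ≡ 1 [MOD P])
    (hord : ordg h (P * B) = B) :
    #{i ∈ range B | x * h ^ i % (P * B) * D / (P * B) = s}
      = B / D + #{m ∈ range (B % D) | (s * (B % D) + m) % D = x % P * D / P} := by
  rw [card_filter, sum_mul_pow_mod_eq (fun y => if y * D / (P * B) = s then 1 else 0) hP hB hx
    hhc hh hord, ← card_filter_mul_add_div_eq_add hD (Nat.mod_mul_div_lt x P D hP hD) hs,
    card_filter]
  simp only [Nat.add_mul_mul_div_mul _ _ _ _ _ hP]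

end Orbit

lemma card_filter_orbit_eq {g b a j k t s : ℕ} (hg : 0 < g) (hb : 0 < b) (hgb : g.Coprime b)
    (hab : a.Coprime b) (hM : ordg g (b ^ (k + t)) = b ^ t * ordg g (b ^ k)) (hs : s < g ^ j)
    (l : ℕ) :
    #{i ∈ range (b ^ t) |
        a * g ^ (i * ordg g (b ^ k) + l) % b ^ (k + t) * g ^ j / b ^ (k + t) = s}
      = b ^ t / g ^ j + #{m ∈ range (b ^ t % g ^ j) |
          (s * (b ^ t % g ^ j) + m) % g ^ j = a * g ^ l % b ^ k * g ^ j / b ^ k} := by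
  set N := ordg g (b ^ k)
  have hN : 0 < N := ordg_pos (hgb.pow_right k) (pow_pos hb k)
  have hgQ : g.Coprime (b ^ k * b ^ t) := by rw [← pow_add]; exact hgb.pow_right _
  have haQ : a.Coprime (b ^ k * b ^ t) := by rw [← pow_add]; exact hab.pow_right _
  have hord : ordg (g ^ N) (b ^ k * b ^ t) = b ^ t := by
    have hdvd : N ∣ ordg g (b ^ k * b ^ t) := by rw [← pow_add, hM]; exact dvd_mul_left N _
    rw [ordg_pow_of_dvd hgQ (by positivity) hN.ne' hdvd, ← pow_add, hM, Nat.mul_div_cancel _ hN]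
  rw [← card_filter_mul_pow_mod_div_eq (pow_pos hb k) (pow_pos hb t) (pow_pos hg j) hs
    (haQ.mul_left (hgQ.pow_left l)) (hgQ.pow_left N)
    (pow_ordg_modEq (hgb.pow_right k) (pow_pos hb k)) hord, pow_add]
  refine congrArg card (filter_congr fun i _ => ?_)
  ring_nf

theorem frequency_transition_general (g b a j t k : ℕ) (hg : 2 ≤ g)
    (hbg : Nat.gcd b g = 1) (hab : Nat.gcd a b = 1)
    (hk : cg g b ≤ k) :
    ∀ s' : ℕ, s' < g ^ j →
      nu g b a j (k + t) s'
        = b ^ t / g ^ j * ordg g (b ^ k)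
          + ∑ m ∈ Finset.range (b ^ t % g ^ j),
              nu g b a j k ((s' * (b ^ t % g ^ j) + m) % g ^ j) := by
  intro s' hs'
  have hgb : g.Coprime b := Nat.Coprime.symm hbg
  have hb : 0 < b := Nat.pos_of_ne_zero fun h => by simp [h] at hbg; omega
  have hN : 0 < ordg g (b ^ k) := ordg_pos (hgb.pow_right k) (pow_pos hb k)
  have hM : ordg g (b ^ (k + t)) = b ^ t * ordg g (b ^ k) :=
    ordg_pow_add_of_cg_le (by omega) hgb hb hk t
  calc nu g b a j (k + t) s'
      = ∑ l ∈ range (ordg g (b ^ k)), #{i ∈ range (b ^ t) |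
          a * g ^ (i * ordg g (b ^ k) + l) % b ^ (k + t) * g ^ j / b ^ (k + t) = s'} := by
        rw [nu_eq_card (by omega) hb (hM ▸ Nat.mul_pos (pow_pos hb t) hN), hM, card_filter,
          sum_range_mul_eq, sum_comm]
        simp only [card_filter]
    _ = ∑ l ∈ range (ordg g (b ^ k)), (b ^ t / g ^ j + #{m ∈ range (b ^ t % g ^ j) |
          (s' * (b ^ t % g ^ j) + m) % g ^ j = a * g ^ l % b ^ k * g ^ j / b ^ k}) :=
        sum_congr rfl fun l _ => card_filter_orbit_eq (by omega) hb hgb hab hM hs' l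
    _ = _ := by
        rw [sum_add_distrib, sum_const, card_range, smul_eq_mul, mul_comm]
        simp only [card_filter]
        rw [sum_comm]
        refine congrArg _ (sum_congr rfl fun m _ => ?_)
        rw [nu_eq_card (by omega) hb hN, card_filter]
        simp only [eq_comm]

/-- For `t ≥ 1` and `k ≥ c_g(b)`, with `u_t = b^t mod g^j`, the frequency
transition formula holds:
`ν_{k+t}(s') = ⌊b^t/g^j⌋·ord_g(b^k) + Σ_{m=0}^{u_t−1} ν_k((s'·u_t + m) mod g^j)`. -/
theorem frequency_transition (g b a j t k : ℕ) (hg : 2 ≤ g) (hb : 1 < b)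
    (hbg : Nat.gcd b g = 1) (ha : 0 < a) (hab : Nat.gcd a b = 1) (hak : a < b ^ k)
    (hj : 1 ≤ j) (ht : 1 ≤ t) (hk : cg g b ≤ k) :
    ∀ s' : ℕ, s' < g ^ j →
      nu g b a j (k + t) s'
        = b ^ t / g ^ j * ordg g (b ^ k)
          + ∑ m ∈ Finset.range (b ^ t % g ^ j),
              nu g b a j k ((s' * (b ^ t % g ^ j) + m) % g ^ j) :=
  frequency_transition_general g b a j t k hg hbg hab hk
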